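/- (Dishonest ending tree node case.) Let f ≥ 2 and let ζ ++ [p] be a route of depth f − 1 where p is dishonest and the primary of ζ is honest, and set m1 = w(ζ, p). Assume the honest backups of ζ ++ [p] strictly outnumber its dishonest backups. Then for every adversary assignment (w, u) satisfying (A1)-(A4) and every honest backup i of ζ ++ [p], one has g(ζ ++ [p], i) = m1. -/

import Mathlib

/-!
Every honest backup `j ≠ i` of `ζ ++ [p]` is an honest primary one level down, at depth `f`,
where (A1) and (A4) make all messages `i` gathers equal; so `g(ζ ++ [p, j], i) = w(ζ ++ [p], j)`
by (A2), and this is `w(ζ, p)` by (A3), as is `i`'s own entry when `i` is honest.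
Honest backups being a strict majority, `w(ζ, p)` wins the vote at `ζ ++ [p]`.
-/


namespace QBA

/-- The majority function: returns the element of `M` occurring most often in `L`,
with ties broken by taking the least such element in the linear order,
and returning the default `d` on the empty list. -/
def maj {M : Type*} [LinearOrder M] (d : M) (L : List M) : M :=
  let s := L.toFinset.filter fun m => ∀ m' ∈ L.toFinset, L.count m' ≤ L.count m
  if h : s.Nonempty then s.min' h else d

/-- A route: a list of pairwise distinct players with head `S`
and length (depth) between `1` and `f`.  Its primary is its last entry,
and its backups are the players not occurring in it. -/
def IsRoute (n f : ℕ) (S : Fin n) (ζ : List (Fin n)) : Prop :=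
  ζ.Nodup ∧ ζ.head? = some S ∧ 1 ≤ ζ.length ∧ ζ.length ≤ f

/-- The primary (last entry) of `ζ` is honest (not in `D`). -/
def HonestPrimary {n : ℕ} (D : Finset (Fin n)) (ζ : List (Fin n)) : Prop :=
  ∀ q ∈ ζ.getLast?, q ∉ D

/-- An adversary assignment `(w, u)`: `w ζ i` is the message backup `i` accepts from
`ζ`'s primary, `u ζ j i` the message forwarder `j` forwards to verifier `i`,
subject to conditions (A1)–(A4). -/
structure Adversary (n f : ℕ) (S : Fin n) (D : Finset (Fin n)) (M : Type*) where
  w : List (Fin n) → Fin n → M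
  u : List (Fin n) → Fin n → Fin n → M
  A1 : ∀ ζ : List (Fin n), IsRoute n f S ζ → HonestPrimary D ζ →
    ∀ i i' : Fin n, i ∉ ζ → i' ∉ ζ → w ζ i = w ζ i'
  A2 : ∀ (ζ : List (Fin n)) (p : Fin n), IsRoute n f S ζ → p ∉ ζ → p ∉ D →
    IsRoute n f S (ζ ++ [p]) → ∀ i : Fin n, i ∉ ζ ++ [p] → w (ζ ++ [p]) i = w ζ p
  A3 : ∀ (ζ : List (Fin n)) (p : Fin n), IsRoute n f S ζ → HonestPrimary D ζ →
    p ∉ ζ → p ∈ D → IsRoute n f S (ζ ++ [p]) →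
    ∀ i : Fin n, i ∉ ζ ++ [p] → i ∉ D → w (ζ ++ [p]) i = w ζ p
  A4 : ∀ (ζ : List (Fin n)) (j i : Fin n), IsRoute n f S ζ → j ∉ ζ → i ∉ ζ → i ≠ j →
    (j ∉ D ∨ HonestPrimary D ζ) → u ζ j i = w ζ j

/-- Fuel-indexed gathering value; for a route `ζ` the fuel is `f - ζ.length`, so fuel `0`
corresponds to the bottom layer `ζ.length = f`. -/
def gAux {n f : ℕ} {S : Fin n} {D : Finset (Fin n)} {M : Type*} [LinearOrder M] [Inhabited M]
    (A : Adversary n f S D M) : ℕ → List (Fin n) → Fin n → M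
  | 0, ζ, i =>
      maj default (A.w ζ i ::
        (((List.finRange n).filter fun j => decide (j ∉ ζ ∧ j ≠ i)).map fun j => A.u ζ j i))
  | k + 1, ζ, i =>
      maj default (((List.finRange n).filter fun j => decide (j ∉ ζ)).map
        fun j => if j = i then A.w ζ i else gAux A k (ζ ++ [j]) i)

/-- The gathering value `g(ζ, i)` of an honest backup `i` of the route `ζ`,
defined by downward recursion on depth: at the bottom layer `ζ.length = f` it is the
majority of `w(ζ, i)` together with `u(ζ, j, i)` over all backups `j ≠ i` of `ζ`;
above the bottom layer it is the majority, over all backups `j` of `ζ`, of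
`g(ζ ++ [j], i)` (where the `j = i` entry is `w(ζ, i)`). -/
def g {n f : ℕ} {S : Fin n} {D : Finset (Fin n)} {M : Type*} [LinearOrder M] [Inhabited M]
    (A : Adversary n f S D M) (ζ : List (Fin n)) (i : Fin n) : M :=
  gAux A (f - ζ.length) ζ i

section Majority

variable {M : Type*} [LinearOrder M]

theorem maj_eq_of_length_lt_two_mul_count (d m : M) {L : List M}
    (h : L.length < 2 * L.count m) : maj d L = m := by
  have hmem : m ∈ L := List.count_pos_iff.mp (by omega)
  have hlt : ∀ m' ≠ m, L.count m' < L.count m := by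
    intro m' hne
    have hsplit : L.length = L.count m + L.countP (fun x => x ≠ m) := by
      simpa [List.count_eq_countP] using L.length_eq_countP_add_countP (· == m)
    have hle : L.count m' ≤ L.countP (fun x => x ≠ m) := by
      rw [List.count_eq_countP]
      exact List.countP_mono_left fun x _ hx => by simp_all
    omega
  have hwinners : (L.toFinset.filter fun x => ∀ y ∈ L.toFinset, L.count y ≤ L.count x) = {m} := by
    ext x
    simp only [Finset.mem_filter, List.mem_toFinset, Finset.mem_singleton]
    constructor
    · rintro ⟨-, hx⟩
      by_contra hne
      exact (hx m hmem).not_gt (hlt x hne)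
    · rintro rfl
      exact ⟨hmem, fun y _ => (eq_or_ne y x).elim (fun h => h ▸ le_rfl) fun h => (hlt y h).le⟩
  simp only [maj, hwinners, Finset.singleton_nonempty, dif_pos, Finset.min'_singleton]

theorem maj_eq_of_forall_eq (d m : M) {L : List M} (hL : L ≠ []) (h : ∀ x ∈ L, x = m) :
    maj d L = m := by
  apply maj_eq_of_length_lt_two_mul_count
  rw [List.count_eq_length.mpr fun x hx => (h x hx).symm]
  have := List.length_pos_iff.mpr hL
  omega

theorem maj_map_eq_of_countP_lt {α : Type*} (d m : M) (B : List α) (v : α → M)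
    (P : α → Prop) [DecidablePred P] (hv : ∀ j ∈ B, P j → v j = m)
    (hlt : B.countP (fun j => ¬P j) < B.countP (fun j => P j)) :
    maj d (B.map v) = m := by
  apply maj_eq_of_length_lt_two_mul_count
  have hcount : B.countP (fun j => P j) ≤ (B.map v).count m := by
    rw [List.count_eq_countP, List.countP_map]
    exact List.countP_mono_left fun j hj hP => by simpa using hv j hj (by simpa using hP)
  have hsplit : B.length = B.countP (fun j => P j) + B.countP (fun j => ¬P j) := by
    simpa using B.length_eq_countP_add_countP (fun j => P j)
  rw [List.length_map]
  omega

end Majority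

section Routes

variable {n f : ℕ} {S : Fin n}

theorem IsRoute.append_singleton {ζ : List (Fin n)} {j : Fin n} (hζ : IsRoute n f S ζ)
    (hj : j ∉ ζ) (hlen : ζ.length < f) : IsRoute n f S (ζ ++ [j]) := by
  obtain ⟨hnodup, hhead, -, -⟩ := hζ
  refine ⟨?_, ?_, ?_, ?_⟩
  · rw [← List.concat_eq_append, List.nodup_concat]
    exact ⟨hj, hnodup⟩
  · rw [List.head?_append, hhead]
    rfl
  all_goals simp only [List.length_append, List.length_singleton]; omega

theorem IsRoute.notMem_of_append_singleton {ζ : List (Fin n)} {p : Fin n}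
    (h : IsRoute n f S (ζ ++ [p])) : p ∉ ζ := by
  have hnodup := h.1
  rw [← List.concat_eq_append, List.nodup_concat] at hnodup
  exact hnodup.1

theorem honestPrimary_append_singleton {D : Finset (Fin n)} (ζ : List (Fin n)) {j : Fin n}
    (hj : j ∉ D) : HonestPrimary D (ζ ++ [j]) := by
  intro q hq
  rw [List.getLast?_concat, Option.mem_some_iff] at hq
  exact hq ▸ hj

theorem countP_backups_eq_card (ζ : List (Fin n)) (P : Fin n → Prop) [DecidablePred P] :
    (((List.finRange n).filter fun j => decide (j ∉ ζ)).countP fun j => P j) =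
      (Finset.univ.filter fun j : Fin n => j ∉ ζ ∧ P j).card := by
  rw [List.countP_eq_length_filter, List.filter_filter,
    ← List.toFinset_card_of_nodup ((List.nodup_finRange n).filter _)]
  congr 1
  ext j
  simp [And.comm]

end Routes

section Gathering

variable {n f : ℕ} {S : Fin n} {D : Finset (Fin n)} {M : Type*} [LinearOrder M] [Inhabited M]
  (A : Adversary n f S D M)

theorem gAux_zero_eq_w_of_honestPrimary {ζ : List (Fin n)} {i : Fin n}
    (hζ : IsRoute n f S ζ) (hprim : HonestPrimary D ζ) (hi : i ∉ ζ) :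
    gAux A 0 ζ i = A.w ζ i := by
  rw [gAux]
  refine maj_eq_of_forall_eq _ _ (List.cons_ne_nil _ _) ?_
  simp only [List.forall_mem_cons, List.forall_mem_map, List.mem_filter, List.mem_finRange,
    true_and, decide_eq_true_eq]
  intro j hj
  rw [A.A4 ζ j i hζ hj.1 hi (Ne.symm hj.2) (Or.inr hprim), A.A1 ζ hζ hprim j i hj.1 hi]

theorem gAux_zero_append_honest_eq_w {ζ : List (Fin n)} {i j : Fin n} (hζ : IsRoute n f S ζ)
    (hlen : ζ.length < f) (hj : j ∉ ζ) (hjD : j ∉ D) (hi : i ∉ ζ) (hij : i ≠ j) :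
    gAux A 0 (ζ ++ [j]) i = A.w ζ j := by
  have hext := hζ.append_singleton hj hlen
  have hi' : i ∉ ζ ++ [j] := by simp [hi, hij]
  rw [gAux_zero_eq_w_of_honestPrimary A hext (honestPrimary_append_singleton ζ hjD) hi',
    A.A2 ζ j hζ hj hjD hext i hi']

end Gathering

theorem dishonest_ending_node_general
    {n f : ℕ} {S : Fin n} {D : Finset (Fin n)} {M : Type*} [LinearOrder M] [Inhabited M]
    (A : Adversary n f S D M) (ζ : List (Fin n)) (p : Fin n)
    (hζ : IsRoute n f S ζ) (hprim : HonestPrimary D ζ) (hpD : p ∈ D)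
    (hroute : IsRoute n f S (ζ ++ [p])) (hlen : (ζ ++ [p]).length = f - 1)
    (hmaj : (Finset.univ.filter fun j : Fin n => j ∉ ζ ++ [p] ∧ j ∈ D).card <
            (Finset.univ.filter fun j : Fin n => j ∉ ζ ++ [p] ∧ j ∉ D).card)
    (i : Fin n) (hi : i ∉ ζ ++ [p]) :
    g A (ζ ++ [p]) i = A.w ζ p := by
  have hpζ := hroute.notMem_of_append_singleton
  have hrelay : ∀ j ∉ ζ ++ [p], j ∉ D → A.w (ζ ++ [p]) j = A.w ζ p :=
    A.A3 ζ p hζ hprim hpζ hpD hroute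
  have hdepth := hroute.2.2.1
  rw [g, show f - (ζ ++ [p]).length = 0 + 1 by omega, gAux]
  refine maj_map_eq_of_countP_lt _ _ _ _ (· ∉ D) ?_ ?_
  · simp only [List.mem_filter, List.mem_finRange, true_and, decide_eq_true_eq]
    intro j hj hjD
    split_ifs with hji
    · subst hji
      exact hrelay j hj hjD
    · rw [gAux_zero_append_honest_eq_w A hroute (by omega) hj hjD hi (Ne.symm hji)]
      exact hrelay j hj hjD
  · simpa only [countP_backups_eq_card, not_not] using hmaj

/-- **Dishonest ending tree node case.** Let `f ≥ 2` and let `ζ ++ [p]` be a route of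
depth `f − 1` where `p` is dishonest and the primary of `ζ` is honest, and set
`m1 = w(ζ, p)`.  Assume the honest backups of `ζ ++ [p]` strictly outnumber its
dishonest backups.  Then for every adversary assignment `(w, u)` satisfying (A1)–(A4)
and every honest backup `i` of `ζ ++ [p]`, one has `g(ζ ++ [p], i) = m1 = w(ζ, p)`. -/
theorem dishonest_ending_node
    {n f : ℕ} {S : Fin n} {D : Finset (Fin n)} {M : Type*} [LinearOrder M] [Inhabited M]
    (hf : 2 ≤ f)
    (A : Adversary n f S D M) (ζ : List (Fin n)) (p : Fin n)
    (hζ : IsRoute n f S ζ) (hprim : HonestPrimary D ζ) (hpD : p ∈ D)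
    (hroute : IsRoute n f S (ζ ++ [p])) (hlen : (ζ ++ [p]).length = f - 1)
    (hmaj : (Finset.univ.filter fun j : Fin n => j ∉ ζ ++ [p] ∧ j ∈ D).card <
            (Finset.univ.filter fun j : Fin n => j ∉ ζ ++ [p] ∧ j ∉ D).card)
    (i : Fin n) (hi : i ∉ ζ ++ [p]) (hiH : i ∉ D) :
    g A (ζ ++ [p]) i = A.w ζ p :=
  dishonest_ending_node_general A ζ p hζ hprim hpD hroute hlen hmaj i hi

end QBA
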